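/- Let P(t) = Σ_{k=0}^{N} b_k·t^k ∈ K[t] be a nonzero polynomial. Then for every root of unity ε ∈ K one has ‖P(ε)‖ ≤ max_{0 ≤ k ≤ N} ‖b_k‖, and for all but finitely many roots of unity ε ∈ K of order coprime to p one has ‖P(ε)‖ = max_{0 ≤ k ≤ N} ‖b_k‖. Equivalently, the minimum over all roots of unity ε ∈ K of v_q(P(ε)) equals min_{0 ≤ k ≤ N} v_q(b_k). -/

import Mathlib

/-- The additive valuation on the algebraic closure of `ℚ_[p]` attached to an absolute
value `v`, normalised so that `q = p ^ d` has valuation `1`. -/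
noncomputable def vq (p d : ℕ) [Fact p.Prime] (v : AlgebraicClosure ℚ_[p] → ℝ)
    (x : AlgebraicClosure ℚ_[p]) : ℝ :=
  -Real.log (v x) / Real.log ((p : ℝ) ^ d)

/-- `ε` is a root of unity. -/
def IsRootOfUnity {K : Type*} [Monoid K] (ε : K) : Prop :=
  ∃ m : ℕ, 0 < m ∧ ε ^ m = 1

/-- `ε` is a root of unity of order coprime to `p`. -/
def IsPrimeToRootOfUnity (p : ℕ) {K : Type*} [Monoid K] (ε : K) : Prop :=
  ∃ m : ℕ, 0 < m ∧ ¬ p ∣ m ∧ ε ^ m = 1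

/-!
The function `v` is a nonarchimedean absolute value `w`. Roots of unity have absolute value `1`,
so the ultrametric inequality gives `w (P ε) ≤ max_k w (b_k)`, the Gauss norm of `P`. Two
distinct roots of unity `ε ≠ ε'` of order `m` prime to `p` are at distance `1`: with
`ζ = ε / ε'`, the integer `m`, of absolute value `1`, equals `∑_{i < m} (1 - ζ ^ i)`, and
every summand is a multiple of `1 - ζ`. Hence the Lagrange basis polynomials attached to such
points have Gauss norm at most `1`, and interpolating `P` at `deg P + 1` of them bounds its
Gauss norm by the largest value `w (P ε)`; so `w (P ε)` is smaller than the Gauss norm for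
fewer than `deg P + 1` of them. As there are infinitely many, the bound is attained, and `v_q` is a
decreasing function of `w`.
-/

open Polynomial Finset

namespace Polynomial

section Semiring

variable {R : Type*} [Semiring R] {v : AbsoluteValue R ℝ}

theorem apply_eval_le_gaussNorm [Nontrivial R] (hna : IsNonarchimedean v) (P : R[X]) {x : R}
    (hx : v x ≤ 1) : v (P.eval x) ≤ P.gaussNorm v 1 := by
  rw [eval_eq_sum_range]
  refine (hna.apply_sum_le_sup nonempty_range_add_one).trans (sup'_le _ _ fun i _ => ?_)
  calc v (P.coeff i * x ^ i) = v (P.coeff i) * v x ^ i := by rw [v.map_mul, v.map_pow]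
    _ ≤ v (P.coeff i) * 1 ^ i := by gcongr
    _ ≤ P.gaussNorm v 1 := P.le_gaussNorm v zero_le_one i

theorem gaussNorm_one_pos {P : R[X]} (hP : P ≠ 0) : 0 < P.gaussNorm v 1 :=
  (gaussNorm_nonneg v P zero_le_one).lt_of_ne'
    ((gaussNorm_eq_zero_iff v P (fun _ => v.eq_zero.1) one_pos).not.2 hP)

theorem gaussNorm_one_eq_sup'_of_eq_sum {P : R[X]} {N : ℕ} {b : ℕ → R}
    (hP : P = ∑ k ∈ range (N + 1), C (b k) * X ^ k) :
    P.gaussNorm v 1 = (range (N + 1)).sup' nonempty_range_add_one fun k => v (b k) := by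
  have hcoeff : ∀ n, P.coeff n = if n ∈ range (N + 1) then b n else 0 := fun n => by
    simp [hP]
  refine le_antisymm ?_ (sup'_le _ _ fun k hk => ?_)
  · obtain ⟨i, hi⟩ := P.exists_eq_gaussNorm v 1
    rw [hi, one_pow, mul_one, hcoeff]
    split_ifs with h
    · exact le_sup' (fun k => v (b k)) h
    · rw [v.map_zero]
      exact (v.nonneg _).trans (le_sup' (fun k => v (b k)) (mem_range.2 N.succ_pos))
  · simpa [hcoeff, hk] using P.le_gaussNorm v zero_le_one k

end Semiring

section Field

variable {K : Type*} [Field K] {v : AbsoluteValue K ℝ}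

theorem gaussNorm_X_sub_C_le_one (hna : IsNonarchimedean v) {y : K} (hy : v y ≤ 1) :
    (X - C y).gaussNorm v 1 ≤ 1 := by
  calc (X - C y).gaussNorm v 1 ≤ max (X.gaussNorm v 1) ((-C y).gaussNorm v 1) := by
        rw [sub_eq_add_neg]; exact isNonarchimedean_gaussNorm v hna zero_le_one _ _
    _ ≤ 1 := by
        rw [← monomial_one_one_eq_X, gaussNorm_monomial, ← C_neg, gaussNorm_C, v.map_neg]
        simpa using hy

theorem gaussNorm_basisDivisor_le_one (hna : IsNonarchimedean v) {x y : K} (hy : v y ≤ 1)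
    (hxy : v (x - y) = 1) : (Lagrange.basisDivisor x y).gaussNorm v 1 ≤ 1 := by
  calc (Lagrange.basisDivisor x y).gaussNorm v 1
      ≤ (C (x - y)⁻¹).gaussNorm v 1 * (X - C y).gaussNorm v 1 :=
        gaussNorm_mul_le v hna _ _ zero_le_one
    _ ≤ 1 := by
        rw [gaussNorm_C, map_inv₀, hxy, inv_one, one_mul]
        exact gaussNorm_X_sub_C_le_one hna hy

theorem gaussNorm_basis_le_one [DecidableEq K] (hna : IsNonarchimedean v) {s : Finset K}
    (hs : ∀ y ∈ s, v y ≤ 1) (hsep : (s : Set K).Pairwise fun x y => v (x - y) = 1)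
    {x : K} (hx : x ∈ s) : (Lagrange.basis s id x).gaussNorm v 1 ≤ 1 := by
  refine (le_prod_of_submultiplicative_of_nonneg _ (gaussNorm_nonneg v · zero_le_one)
    (by rw [← C_1, gaussNorm_C, v.map_one]) (gaussNorm_mul_le v hna · · zero_le_one) _ _).trans
    (prod_le_one (fun _ _ => gaussNorm_nonneg v _ zero_le_one) fun y hy => ?_)
  obtain ⟨hyx, hy⟩ := mem_erase.1 hy
  exact gaussNorm_basisDivisor_le_one hna (hs y hy) (hsep hx hy hyx.symm)

theorem gaussNorm_le_sup'_apply_eval (hna : IsNonarchimedean v) {s : Finset K}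
    (hs : ∀ y ∈ s, v y ≤ 1) (hsep : (s : Set K).Pairwise fun x y => v (x - y) = 1)
    (hne : s.Nonempty) {P : K[X]} (hP : P.degree < #s) :
    P.gaussNorm v 1 ≤ s.sup' hne fun x => v (P.eval x) := by
  classical
  conv_lhs => rw [Lagrange.eq_interpolate (Set.injOn_id _) hP, Lagrange.interpolate_apply]
  refine ((isNonarchimedean_gaussNorm v hna zero_le_one).apply_sum_le_sup hne).trans
    (sup'_mono_fun fun x hx => ?_)
  calc (C (P.eval x) * Lagrange.basis s id x).gaussNorm v 1
      ≤ v (P.eval x) * (Lagrange.basis s id x).gaussNorm v 1 := by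
        simpa using gaussNorm_mul_le v hna (C (P.eval x)) _ zero_le_one
    _ ≤ v (P.eval x) :=
        mul_le_of_le_one_right (v.nonneg _) (gaussNorm_basis_le_one hna hs hsep hx)

theorem finite_setOf_apply_eval_ne_gaussNorm (hna : IsNonarchimedean v) {S : Set K}
    (hS : ∀ y ∈ S, v y ≤ 1) (hsep : S.Pairwise fun x y => v (x - y) = 1) (P : K[X]) :
    {x | x ∈ S ∧ v (P.eval x) ≠ P.gaussNorm v 1}.Finite := by
  by_contra hinf
  obtain ⟨s, hsS, hcard⟩ := Set.Infinite.exists_subset_card_eq hinf (P.natDegree + 1)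
  have hne : s.Nonempty := card_pos.1 (by omega)
  have hlt : s.sup' hne (fun x => v (P.eval x)) < P.gaussNorm v 1 :=
    (sup'_lt_iff hne).2 fun x hx =>
      ((apply_eval_le_gaussNorm hna P (hS x (hsS hx).1)).lt_of_ne (hsS hx).2)
  refine hlt.not_ge (gaussNorm_le_sup'_apply_eval hna (fun y hy => hS y (hsS hy).1)
    (hsep.mono fun y hy => (hsS hy).1) hne ?_)
  rw [hcard]
  exact_mod_cast degree_le_natDegree.trans_lt (WithBot.coe_lt_coe.2 P.natDegree.lt_succ_self)

end Field

end Polynomial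

namespace AbsoluteValue

variable {K : Type*} [Field K] {v : AbsoluteValue K ℝ}

theorem apply_eq_one_of_pow_eq_one {x : K} {n : ℕ} (hx : x ^ n = 1) (hn : n ≠ 0) : v x = 1 :=
  (pow_eq_one_iff_of_nonneg (v.nonneg x) hn).1 (by rw [← v.map_pow, hx, v.map_one])

theorem apply_eq_one_of_isRootOfUnity {ε : K} (hε : IsRootOfUnity ε) : v ε = 1 :=
  let ⟨_, hm, hεm⟩ := hε
  apply_eq_one_of_pow_eq_one hεm hm.ne'

theorem apply_one_sub_pow_le (hna : IsNonarchimedean v) {x : K} (hx : v x ≤ 1) (n : ℕ) :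
    v (1 - x ^ n) ≤ v (1 - x) := by
  induction n with
  | zero => simp
  | succ n ih =>
    calc v (1 - x ^ (n + 1)) = v ((1 - x ^ n) + x ^ n * (1 - x)) := by ring_nf
      _ ≤ max (v (1 - x ^ n)) (v (x ^ n * (1 - x))) := hna _ _
      _ ≤ v (1 - x) := by
        rw [v.map_mul, v.map_pow]
        exact max_le ih (mul_le_of_le_one_left (v.nonneg _) (pow_le_one₀ (v.nonneg _) hx))

theorem apply_sub_one_eq_one_of_pow_eq_one (hna : IsNonarchimedean v) {ζ : K} {n : ℕ}
    (hζn : ζ ^ n = 1) (hζ : ζ ≠ 1) (hn : v n = 1) : v (ζ - 1) = 1 := by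
  have hn0 : n ≠ 0 := by rintro rfl; simp at hn
  have hvζ : v ζ = 1 := apply_eq_one_of_pow_eq_one hζn hn0
  have hsum : (n : K) = ∑ i ∈ range n, (1 - ζ ^ i) := by
    rw [sum_sub_distrib, geom_sum_eq hζ, hζn, sub_self, zero_div, sub_zero, sum_const,
      card_range, nsmul_one]
  refine le_antisymm ?_ ?_
  · calc v (ζ - 1) = v (ζ + -1) := by rw [sub_eq_add_neg]
      _ ≤ max (v ζ) (v (-1)) := hna _ _
      _ = 1 := by rw [hvζ, v.map_neg, v.map_one, max_self]
  · calc 1 = v n := hn.symm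
      _ ≤ (range n).sup' (nonempty_range_iff.2 hn0) fun i => v (1 - ζ ^ i) :=
        hsum ▸ hna.apply_sum_le_sup _
      _ ≤ v (1 - ζ) := sup'_le _ _ fun i _ => apply_one_sub_pow_le hna hvζ.le i
      _ = v (ζ - 1) := v.map_sub _ _

theorem apply_sub_eq_one_of_pow_eq_one (hna : IsNonarchimedean v) {x y : K} {n : ℕ}
    (hx : x ^ n = 1) (hy : y ^ n = 1) (hn : v n = 1) (hxy : x ≠ y) : v (x - y) = 1 := by
  have hn0 : n ≠ 0 := by rintro rfl; simp at hn
  have hy0 : y ≠ 0 := by rintro rfl; simp [hn0] at hy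
  calc v (x - y) = v (x / y - 1) * v y := by
        rw [← v.map_mul, sub_mul, div_mul_cancel₀ _ hy0, one_mul]
    _ = 1 := by
      rw [apply_sub_one_eq_one_of_pow_eq_one hna (by rw [div_pow, hx, hy, div_one])
        (by rwa [Ne, div_eq_one_iff_eq hy0]) hn, apply_eq_one_of_pow_eq_one hy hn0, one_mul]

theorem pairwise_apply_sub_eq_one_of_isPrimeToRootOfUnity (hna : IsNonarchimedean v) {p : ℕ}
    (hp : p.Prime) (hv : ∀ n : ℕ, ¬ p ∣ n → v n = 1) :
    {ε : K | IsPrimeToRootOfUnity p ε}.Pairwise fun x y => v (x - y) = 1 := by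
  rintro x ⟨m, -, hpm, hxm⟩ y ⟨m', -, hpm', hym'⟩ hxy
  refine apply_sub_eq_one_of_pow_eq_one hna (n := m * m') ?_ ?_ (hv _ ?_) hxy
  · rw [pow_mul, hxm, one_pow]
  · rw [mul_comm, pow_mul, hym', one_pow]
  · exact fun h => (hp.dvd_mul.1 h).elim hpm hpm'

def ofIsNonarchimedean {K : Type*} [DivisionRing K] (v : K → ℝ)
    (hmul : ∀ x y, v (x * y) = v x * v y) (hna : IsNonarchimedean v) (hnn : ∀ x, 0 ≤ v x)
    (h0 : v 0 = 0) (h1 : v 1 = 1) : AbsoluteValue K ℝ where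
  toFun := v
  map_mul' := hmul
  nonneg' := hnn
  eq_zero' x := ⟨fun hx => by_contra fun hx0 => by
    simpa [mul_inv_cancel₀ hx0, hx, h1] using hmul x x⁻¹, fun hx => hx ▸ h0⟩
  add_le' x y := (hna x y).trans (max_le_add_of_nonneg (hnn x) (hnn y))

end AbsoluteValue

theorem IsPrimeToRootOfUnity.isRootOfUnity {p : ℕ} {M : Type*} [Monoid M] {ε : M}
    (h : IsPrimeToRootOfUnity p ε) : IsRootOfUnity ε :=
  let ⟨m, hm, _, hεm⟩ := h
  ⟨m, hm, hεm⟩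

theorem infinite_setOf_isPrimeToRootOfUnity (K : Type*) [Field K] [IsSepClosed K] [CharZero K]
    {p : ℕ} (hp : p.Prime) : {ε : K | IsPrimeToRootOfUnity p ε}.Infinite := by
  have hpk : ∀ k, ¬ p ∣ (p + 1) ^ k := fun k h =>
    hp.one_lt.ne' (Nat.dvd_one.1 ((Nat.dvd_add_right dvd_rfl).1 (hp.dvd_of_dvd_pow h)))
  have hζ : ∀ k : ℕ, ∃ ζ : K, IsPrimitiveRoot ζ ((p + 1) ^ k) := fun k =>
    have : NeZero (((p + 1) ^ k : ℕ) : K) := ⟨by exact_mod_cast (pow_pos p.succ_pos k).ne'⟩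
    HasEnoughRootsOfUnity.exists_primitiveRoot K _
  choose ζ hζ using hζ
  refine Set.infinite_of_injective_forall_mem (f := ζ) (fun k l hkl => ?_)
    fun k => ⟨_, pow_pos p.succ_pos k, hpk k, (hζ k).pow_eq_one⟩
  exact Nat.pow_right_injective (Nat.succ_le_succ hp.one_lt.le) ((hζ k).unique (hkl ▸ hζ l))

theorem IsAlgClosed.nonneg_of_map_mul {K : Type*} [Field K] [IsAlgClosed K] {v : K → ℝ}
    (hmul : ∀ x y, v (x * y) = v x * v y) (x : K) : 0 ≤ v x := by
  obtain ⟨y, rfl⟩ := IsAlgClosed.exists_pow_nat_eq x two_pos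
  rw [pow_two, hmul]
  exact mul_self_nonneg _

theorem map_zero_of_map_mul {M : Type*} [MulZeroClass M] {v : M → ℝ}
    (hmul : ∀ x y, v (x * y) = v x * v y) {a : M} (ha : v a ≠ 1) : v 0 = 0 := by
  by_contra h0
  exact ha ((mul_eq_right₀ h0).1 (by rw [← hmul, mul_zero]))

section PadicExtension

variable {p : ℕ} [Fact p.Prime] {K : Type*} [Semiring K] [Algebra ℚ_[p] K] {v : K → ℝ}
  (hext : ∀ x : ℚ_[p], v (algebraMap ℚ_[p] K x) = ‖x‖)

include hext

theorem map_one_of_extends_padicNorm : v 1 = 1 := by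
  simpa using hext 1

theorem map_natCast_of_extends_padicNorm {n : ℕ} (hn : ¬ p ∣ n) : v n = 1 := by
  rw [← map_natCast (algebraMap ℚ_[p] K), hext, Padic.norm_natCast_eq_one_iff]
  exact (Nat.Prime.coprime_iff_not_dvd Fact.out).2 hn

theorem map_zero_of_extends_padicNorm (hmul : ∀ x y, v (x * y) = v x * v y) : v 0 = 0 := by
  refine map_zero_of_map_mul hmul (a := (p : K)) ?_
  rw [← map_natCast (algebraMap ℚ_[p] K), hext, Padic.norm_p, Ne, inv_eq_one, Nat.cast_eq_one]
  exact (Fact.out : p.Prime).one_lt.ne'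

end PadicExtension

theorem vq_le_vq {p d : ℕ} [Fact p.Prime] (hd : 0 < d) {v : AlgebraicClosure ℚ_[p] → ℝ}
    {x y : AlgebraicClosure ℚ_[p]} (hx : 0 < v x) (hxy : v x ≤ v y) :
    vq p d v y ≤ vq p d v x := by
  have hq : 0 < Real.log ((p : ℝ) ^ d) :=
    Real.log_pos (one_lt_pow₀ (by exact_mod_cast (Fact.out : p.Prime).one_lt) hd.ne')
  unfold vq
  gcongr

theorem isLeast_setOf_vq {p d : ℕ} [Fact p.Prime] (hd : 0 < d)
    (w : AbsoluteValue (AlgebraicClosure ℚ_[p]) ℝ) {ι : Type*} {Q : ι → Prop}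
    {f : ι → AlgebraicClosure ℚ_[p]} {i₀ : ι} (hi₀ : Q i₀) (hf : f i₀ ≠ 0)
    (hmax : ∀ i, Q i → w (f i) ≤ w (f i₀)) :
    IsLeast {r | ∃ i, Q i ∧ f i ≠ 0 ∧ r = vq p d w (f i)} (vq p d w (f i₀)) := by
  refine ⟨⟨i₀, hi₀, hf, rfl⟩, ?_⟩
  rintro r ⟨i, hi, hfi, rfl⟩
  exact vq_le_vq hd (w.pos hfi) (hmax i hi)

theorem padic_norm_of_polynomial_at_roots_of_unity_eq_sup_of_coefficients
    (p : ℕ) [Fact p.Prime] (d : ℕ) (hd : 0 < d)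
    (v : AlgebraicClosure ℚ_[p] → ℝ)
    (hmul : ∀ x y, v (x * y) = v x * v y)
    (hna : ∀ x y, v (x + y) ≤ max (v x) (v y))
    (hext : ∀ x : ℚ_[p], v (algebraMap ℚ_[p] (AlgebraicClosure ℚ_[p]) x) = ‖x‖)
    (N : ℕ) (b : ℕ → AlgebraicClosure ℚ_[p])
    (P : Polynomial (AlgebraicClosure ℚ_[p]))
    (hPdef : P = ∑ k ∈ Finset.range (N + 1), Polynomial.C (b k) * Polynomial.X ^ k)
    (hP : P ≠ 0) :
    (∀ ε : AlgebraicClosure ℚ_[p], IsRootOfUnity ε →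
        v (P.eval ε) ≤ (Finset.range (N + 1)).sup' Finset.nonempty_range_add_one
          fun k => v (b k)) ∧
    {ε : AlgebraicClosure ℚ_[p] | IsPrimeToRootOfUnity p ε ∧
        v (P.eval ε) ≠ (Finset.range (N + 1)).sup' Finset.nonempty_range_add_one
          fun k => v (b k)}.Finite ∧
    -- equivalently: the minimum over all roots of unity `ε` of `v_q(P(ε))` equals
    -- `min_{0 ≤ k ≤ N} v_q(b_k)` (the minimum being over the nonzero coefficients,
    -- since `v_q(0) = +∞`)
    ∃ m : ℝ,
      IsLeast {r : ℝ | ∃ ε : AlgebraicClosure ℚ_[p], IsRootOfUnity ε ∧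
        P.eval ε ≠ 0 ∧ r = vq p d v (P.eval ε)} m ∧
      IsLeast {r : ℝ | ∃ k : ℕ, k ≤ N ∧ b k ≠ 0 ∧ r = vq p d v (b k)} m := by
  let w : AbsoluteValue (AlgebraicClosure ℚ_[p]) ℝ := .ofIsNonarchimedean v hmul hna
    (IsAlgClosed.nonneg_of_map_mul hmul) (map_zero_of_extends_padicNorm hext hmul)
    (map_one_of_extends_padicNorm hext)
  have hw : IsNonarchimedean w := hna
  have hM : (range (N + 1)).sup' nonempty_range_add_one (fun k => v (b k)) = P.gaussNorm w 1 :=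
    (gaussNorm_one_eq_sup'_of_eq_sum (v := w) hPdef).symm
  have hMpos : 0 < P.gaussNorm w 1 := gaussNorm_one_pos hP
  obtain ⟨k₀, hk₀, hbk₀⟩ := exists_mem_eq_sup' nonempty_range_add_one fun k => v (b k)
  rw [hM] at hbk₀ ⊢
  have hle : ∀ ε, IsRootOfUnity ε → v (P.eval ε) ≤ P.gaussNorm w 1 := fun ε hε =>
    apply_eval_le_gaussNorm hw P (w.apply_eq_one_of_isRootOfUnity hε).le
  have hfin : {ε | IsPrimeToRootOfUnity p ε ∧ v (P.eval ε) ≠ P.gaussNorm w 1}.Finite :=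
    finite_setOf_apply_eval_ne_gaussNorm hw
      (fun ε hε => (w.apply_eq_one_of_isRootOfUnity hε.isRootOfUnity).le)
      (w.pairwise_apply_sub_eq_one_of_isPrimeToRootOfUnity hw Fact.out
        fun _ => map_natCast_of_extends_padicNorm hext) P
  obtain ⟨ε₀, hε₀, hPε₀⟩ :
      ∃ ε, IsPrimeToRootOfUnity p ε ∧ v (P.eval ε) = P.gaussNorm w 1 := by
    obtain ⟨ε, hε, hε'⟩ :=
      ((infinite_setOf_isPrimeToRootOfUnity _ (Fact.out : p.Prime)).sdiff hfin).nonempty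
    exact ⟨ε, hε, of_not_not fun h => hε' ⟨hε, h⟩⟩
  refine ⟨hle, hfin, vq p d v (b k₀), ?_, isLeast_setOf_vq hd w (mem_range_succ_iff.1 hk₀)
    (w.pos_iff.1 (hMpos.trans_eq hbk₀)) fun k hk => (le_sup' (fun k => v (b k))
      (mem_range_succ_iff.2 hk)).trans_eq (hM.trans hbk₀)⟩
  rw [show vq p d v (b k₀) = vq p d v (P.eval ε₀) by rw [vq, vq, hPε₀, hbk₀]]
  exact isLeast_setOf_vq hd w hε₀.isRootOfUnity (w.pos_iff.1 (hMpos.trans_eq hPε₀.symm))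
    fun ε hε => (hle ε hε).trans_eq hPε₀.symm
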